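/- Let n ≥ 1 be an integer, λ > 0, A > 0, and r ≥ λ^{−1/2}. Let Q : [−r, r] → ℝ be n+2 times continuously differentiable with |Q^{(t)}(y)| ≤ A |y|^{2n+1−t} for all y ∈ [−r,r] and 0 ≤ t ≤ n+2. Define, for y ≠ 0, ψ_1(y) = Q(y)/(4πi λ y) and ψ_k(y) = −ψ'_{k−1}(y)/(4πi λ y) for 2 ≤ k ≤ n+1. Then ∫_{−r}^{r} Q(y) e(λ y²) dy = [ e(λ y²) Σ_{k=1}^{n+1} ψ_k(y) ]_{−r}^{r} + O( A λ^{−(n+1)} ), with implied constant depending only on n. -/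

import Mathlib

/-!
Since `d/dy e(λy²) = 4πiλy · e(λy²)`, the recursion defining the `ψ_k` is repeated integration
by parts: away from `0`, `F = e(λy²) · ∑_{k ≤ N} ψ_k` satisfies `F' = e(λy²) (Q - 4πiλy ψ_{N+1})`.
By induction, `ψ_k = ∑_{j<k} c_j Q^{(j)}(y) y^{j+1-2k}` with `∑ |c_j| ≤ k!/λ^k`, so the hypothesis
on `Q` gives `|ψ_k(y)| ≤ k! A λ^{-(n+1)} (λy²)^{n+1-k}`.

Split `[-r, r]` at `±d`, `d = λ^{-1/2}`. The middle piece is trivially `O(A λ^{-(n+1)})`. On the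
outer pieces integrate by parts `n + 2` times, one more than in the statement, so that the
remainder `4πiλy ψ_{n+3}` is `O(A λ^{-(n+2)} |y|^{-3})`, whose integral over `|y| ≥ d` is
`O(A λ^{-(n+1)})`. The boundary terms at `±d` (where `λy² = 1`) and the extra terms
`e(λr²) ψ_{n+2}(±r)` are of the same size.
-/

open Complex Set Finset
open scoped Nat

/-- `e(t) = exp(2πit)`. -/
noncomputable def e (t : ℝ) : ℂ := Complex.exp (2 * Real.pi * Complex.I * t)

lemma eventuallyEq_nhdsWithin_of_eqOn_sdiff {X Y : Type*} [TopologicalSpace X] [T1Space X]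
    {f g : X → Y} {s : Set X} {a y : X} (h : EqOn f g (s \ {a})) (hy : y ≠ a) :
    f =ᶠ[nhdsWithin y s] g := by
  rw [← hy.nhdsWithin_sdiff_singleton]
  exact h.eventuallyEq_nhdsWithin

section Jet

variable {s : Set ℝ} {Q : ℝ → ℝ} {N j : ℕ} {A : ℝ} {w m : ℤ} {y : ℝ}

noncomputable def jetTerm (s : Set ℝ) (Q : ℝ → ℝ) (j : ℕ) (m : ℤ) (y : ℝ) : ℂ :=
  ((iteratedDerivWithin j Q s y : ℝ) : ℂ) * (y : ℂ) ^ m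

lemma mul_jetTerm_sub_one (hy0 : y ≠ 0) :
    (y : ℂ) * jetTerm s Q j (m - 1) y = jetTerm s Q j m y := by
  have hy : (y : ℂ) ≠ 0 := by exact_mod_cast hy0
  rw [jetTerm, jetTerm, mul_left_comm, ← zpow_one_add₀ hy, add_sub_cancel]

lemma hasDerivWithinAt_jetTerm (hs : UniqueDiffOn ℝ s) (hQ : ContDiffOn ℝ N Q s)
    (hj : j < N) (hy : y ∈ s) (hy0 : y ≠ 0) (m : ℤ) :
    HasDerivWithinAt (jetTerm s Q j m)
      (jetTerm s Q (j + 1) m y + m * jetTerm s Q j (m - 1) y) s y := by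
  have hD : HasDerivWithinAt (iteratedDerivWithin j Q s)
      (iteratedDerivWithin (j + 1) Q s y) s y := by
    rw [iteratedDerivWithin_succ]
    exact ((hQ.differentiableOn_iteratedDerivWithin (by exact_mod_cast hj) hs) y
      hy).hasDerivWithinAt
  have hpow : HasDerivAt (fun z : ℝ => (z : ℂ) ^ m) (m * (y : ℂ) ^ (m - 1)) y :=
    (hasDerivAt_zpow m (y : ℂ) (Or.inl (by exact_mod_cast hy0))).comp_ofReal
  refine (hD.ofReal_comp.fun_mul hpow.hasDerivWithinAt).congr_deriv ?_
  rw [jetTerm, jetTerm]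
  ring

lemma norm_jetTerm_le (hD : |iteratedDerivWithin j Q s y| ≤ A * |y| ^ (w - j))
    (hy0 : y ≠ 0) :
    ‖jetTerm s Q j m y‖ ≤ A * |y| ^ (w - j + m) := by
  rw [jetTerm, norm_mul, norm_zpow, norm_real, norm_real, Real.norm_eq_abs, Real.norm_eq_abs,
    zpow_add₀ (abs_ne_zero.2 hy0), ← mul_assoc]
  exact mul_le_mul_of_nonneg_right hD (by positivity)

noncomputable def jetSum (s : Set ℝ) (Q : ℝ → ℝ) (k : ℕ) (c : Fin k → ℂ) (y : ℝ) : ℂ :=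
  ∑ i, c i * jetTerm s Q i ((i : ℤ) + 1 - 2 * k) y

noncomputable def jetShift (k : ℕ) (c : Fin k → ℂ) : Fin (k + 1) → ℂ :=
  Fin.cons 0 c + Fin.snoc (fun i => (((i : ℤ) + 1 - 2 * k : ℤ) : ℂ) * c i) 0

lemma jetSum_smul (k : ℕ) (a : ℂ) (c : Fin k → ℂ) (y : ℝ) :
    jetSum s Q k (a • c) y = a * jetSum s Q k c y := by
  simp only [jetSum, Finset.mul_sum, Pi.smul_apply, smul_eq_mul, mul_assoc]

lemma sum_norm_jetShift_le (k : ℕ) (c : Fin k → ℂ) :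
    ∑ i, ‖jetShift k c i‖ ≤ (2 * k + 1) * ∑ i, ‖c i‖ := by
  have hcoeff (i : Fin k) : ‖(((i : ℤ) + 1 - 2 * k : ℤ) : ℂ) * c i‖ ≤ 2 * k * ‖c i‖ := by
    rw [norm_mul, norm_intCast]
    gcongr
    have : |((i : ℤ) + 1 - 2 * k : ℤ)| ≤ 2 * k := by
      rw [abs_le]; constructor <;> omega
    exact_mod_cast this
  calc ∑ i, ‖jetShift k c i‖
      ≤ ∑ i : Fin (k + 1), (‖(Fin.cons 0 c : Fin (k + 1) → ℂ) i‖
        + ‖(Fin.snoc (fun i : Fin k => (((i : ℤ) + 1 - 2 * k : ℤ) : ℂ) * c i) 0 :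
            Fin (k + 1) → ℂ) i‖) :=
        Finset.sum_le_sum fun i _ => norm_add_le _ _
    _ = ∑ i, ‖c i‖ + ∑ i : Fin k, ‖(((i : ℤ) + 1 - 2 * k : ℤ) : ℂ) * c i‖ := by
        rw [Finset.sum_add_distrib, Fin.sum_univ_succ, Fin.sum_univ_castSucc]
        simp
    _ ≤ ∑ i, ‖c i‖ + ∑ i, 2 * k * ‖c i‖ := by gcongr with i; exact hcoeff i
    _ = (2 * k + 1) * ∑ i, ‖c i‖ := by rw [← Finset.mul_sum]; ring

lemma jetSum_jetShift (k : ℕ) (c : Fin k → ℂ) (y : ℝ) :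
    jetSum s Q (k + 1) (jetShift k c) y = ∑ i : Fin k, c i *
      (jetTerm s Q (i + 1) ((i : ℤ) - 2 * k) y
        + ((i : ℤ) + 1 - 2 * k : ℤ) * jetTerm s Q i ((i : ℤ) - 1 - 2 * k) y) := by
  simp only [jetSum, jetShift, Pi.add_apply, add_mul, Finset.sum_add_distrib, mul_add]
  rw [Fin.sum_univ_succ, Fin.sum_univ_castSucc]
  simp only [Fin.cons_zero, Fin.cons_succ, Fin.snoc_castSucc, Fin.snoc_last, zero_mul,
    zero_add, add_zero, Fin.val_succ, Fin.val_castSucc, mul_assoc]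
  congr 1 <;> refine Finset.sum_congr rfl fun i _ => ?_ <;> push_cast <;> ring_nf

lemma hasDerivWithinAt_jetSum (hs : UniqueDiffOn ℝ s) (hQ : ContDiffOn ℝ N Q s) {k : ℕ}
    (hk : k ≤ N) (c : Fin k → ℂ) (hy : y ∈ s) (hy0 : y ≠ 0) :
    HasDerivWithinAt (jetSum s Q k c) (y * jetSum s Q (k + 1) (jetShift k c) y) s y := by
  have hterm (i : Fin k) := ((hasDerivWithinAt_jetTerm hs hQ (i.2.trans_le hk) hy hy0
    ((i : ℤ) + 1 - 2 * k)).const_mul (c i))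
  refine (HasDerivWithinAt.fun_sum fun i _ => hterm i).congr_deriv ?_
  rw [jetSum_jetShift, Finset.mul_sum]
  refine Finset.sum_congr rfl fun i _ => ?_
  rw [show (i : ℤ) - 2 * k = (i : ℤ) + 1 - 2 * k - 1 by ring,
    show (i : ℤ) - 1 - 2 * k = (i : ℤ) + 1 - 2 * k - 1 - 1 by ring, mul_left_comm (y : ℂ),
    mul_add (y : ℂ), mul_jetTerm_sub_one hy0, mul_left_comm (y : ℂ), mul_jetTerm_sub_one hy0]

lemma norm_jetSum_le {k : ℕ}
    (hD : ∀ i < k, |iteratedDerivWithin i Q s y| ≤ A * |y| ^ (w - i)) (hy0 : y ≠ 0)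
    (c : Fin k → ℂ) :
    ‖jetSum s Q k c y‖ ≤ (∑ i, ‖c i‖) * (A * |y| ^ (w + 1 - 2 * k)) := by
  rw [jetSum, Finset.sum_mul]
  refine (norm_sum_le _ _).trans (Finset.sum_le_sum fun i _ => ?_)
  rw [norm_mul]
  gcongr
  exact (norm_jetTerm_le (hD i i.2) hy0).trans_eq (by ring_nf)

lemma continuousOn_jetSum (hs : UniqueDiffOn ℝ s) (hQ : ContDiffOn ℝ N Q s) {k : ℕ}
    (hk : k ≤ N + 1) (c : Fin k → ℂ) : ContinuousOn (jetSum s Q k c) (s \ {0}) := by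
  refine continuousOn_finsetSum _ fun i _ => continuousOn_const.mul ?_
  have hD := hQ.continuousOn_iteratedDerivWithin (m := i)
    (by exact_mod_cast (by omega : (i : ℕ) ≤ N)) hs
  refine (continuous_ofReal.comp_continuousOn (hD.mono sdiff_subset)).mul ?_
  exact continuous_ofReal.continuousOn.zpow₀ _ fun x hx => Or.inl (by exact_mod_cast hx.2)

end Jet

section PhaseTerm

open Real

variable {lam A : ℝ} {s : Set ℝ} {Q : ℝ → ℝ} {N k : ℕ} {w : ℤ} {y : ℝ}

noncomputable def phaseTerm (lam : ℝ) (s : Set ℝ) (Q : ℝ → ℝ) : ℕ → ℝ → ℂ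
  | 0 => 0
  | 1 => fun y => Q y / (4 * π * I * lam * y)
  | k + 2 => fun y => -derivWithin (phaseTerm lam s Q (k + 1)) s y / (4 * π * I * lam * y)

lemma phaseTerm_succ (hk : 1 ≤ k) (y : ℝ) :
    phaseTerm lam s Q (k + 1) y =
      -derivWithin (phaseTerm lam s Q k) s y / (4 * π * I * lam * y) := by
  obtain ⟨k, rfl⟩ := Nat.exists_eq_add_of_le' hk
  rfl

lemma four_pi_I_mul_ne_zero (hlam : 0 < lam) (hy0 : y ≠ 0) :
    (4 * π * I * lam * y : ℂ) ≠ 0 := by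
  have : (lam : ℂ) ≠ 0 := by exact_mod_cast hlam.ne'
  have : (y : ℂ) ≠ 0 := by exact_mod_cast hy0
  have : (π : ℂ) ≠ 0 := by exact_mod_cast pi_ne_zero
  simp [*, I_ne_zero]

lemma exists_phaseTerm_eqOn_jetSum (hs : UniqueDiffOn ℝ s) (hQ : ContDiffOn ℝ N Q s)
    (hlam : 0 < lam) (hk1 : 1 ≤ k) (hkN : k ≤ N + 1) :
    ∃ c : Fin k → ℂ, ∑ i, ‖c i‖ ≤ k ! / lam ^ k ∧
      EqOn (phaseTerm lam s Q k) (jetSum s Q k c) (s \ {0}) := by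
  have hω : ‖(4 * π * I * lam : ℂ)⁻¹‖ = (4 * π * lam)⁻¹ := by
    simp [abs_of_pos pi_pos, abs_of_pos hlam]
  induction k, hk1 using Nat.le_induction with
  | base =>
    refine ⟨fun _ => (4 * π * I * lam)⁻¹, ?_, fun y hy => ?_⟩
    · simp only [Finset.univ_unique, Finset.sum_singleton, hω, Nat.factorial_one, pow_one]
      rw [Nat.cast_one, one_div]
      exact inv_anti₀ hlam (by nlinarith [pi_gt_three])
    · have hy0 : (y : ℂ) ≠ 0 := by exact_mod_cast hy.2
      simp only [phaseTerm, jetSum, jetTerm, Finset.univ_unique, Finset.sum_singleton,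
        Fin.default_eq_zero, Fin.val_zero, iteratedDerivWithin_zero]
      rw [show ((0 : ℕ) : ℤ) + 1 - 2 * ((1 : ℕ) : ℤ) = -1 by norm_num, zpow_neg_one]
      field_simp
  | succ k hk ih =>
    obtain ⟨c, hc, hcφ⟩ := ih (by omega)
    refine ⟨-(4 * π * I * lam)⁻¹ • jetShift k c, ?_, fun y hy => ?_⟩
    · calc ∑ i, ‖(-(4 * π * I * lam)⁻¹ • jetShift k c) i‖
          = (4 * π * lam)⁻¹ * ∑ i, ‖jetShift k c i‖ := by
            simp only [Pi.smul_apply, smul_eq_mul, norm_mul, norm_neg, hω, Finset.mul_sum]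
        _ ≤ (4 * π * lam)⁻¹ * ((2 * k + 1) * (k ! / lam ^ k)) := by
            gcongr
            exact (sum_norm_jetShift_le k c).trans (by gcongr)
        _ ≤ (k + 1) ! / lam ^ (k + 1) := by
            rw [Nat.factorial_succ, pow_succ]
            push_cast
            field_simp
            nlinarith [pi_gt_three]
    · have hJ := hasDerivWithinAt_jetSum hs hQ (by omega) c hy.1 hy.2
      rw [phaseTerm_succ hk, (eventuallyEq_nhdsWithin_of_eqOn_sdiff hcφ hy.2).derivWithin_eq
        (hcφ hy), hJ.derivWithin (hs y hy.1), jetSum_smul]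
      have hy0 : (y : ℂ) ≠ 0 := by exact_mod_cast hy.2
      field_simp [four_pi_I_mul_ne_zero hlam hy.2]

lemma hasDerivWithinAt_phaseTerm (hs : UniqueDiffOn ℝ s) (hQ : ContDiffOn ℝ N Q s)
    (hlam : 0 < lam) (hk1 : 1 ≤ k) (hkN : k ≤ N) (hy : y ∈ s) (hy0 : y ≠ 0) :
    HasDerivWithinAt (phaseTerm lam s Q k)
      (-(4 * π * I * lam * y) * phaseTerm lam s Q (k + 1) y) s y := by
  obtain ⟨c, -, hc⟩ := exists_phaseTerm_eqOn_jetSum hs hQ hlam hk1 (by omega)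
  have hderiv := (hasDerivWithinAt_jetSum hs hQ hkN c hy hy0).congr_of_eventuallyEq
    (eventuallyEq_nhdsWithin_of_eqOn_sdiff hc hy0) (hc ⟨hy, hy0⟩)
  rw [phaseTerm_succ hk1, neg_div, neg_mul_neg,
    mul_div_cancel₀ _ (four_pi_I_mul_ne_zero hlam hy0)]
  exact hderiv.differentiableWithinAt.hasDerivWithinAt

lemma norm_phaseTerm_le (hs : UniqueDiffOn ℝ s) (hQ : ContDiffOn ℝ N Q s) (hlam : 0 < lam)
    (hA : 0 ≤ A) (hD : ∀ j ≤ N, |iteratedDerivWithin j Q s y| ≤ A * |y| ^ (w - j))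
    (hk1 : 1 ≤ k) (hkN : k ≤ N + 1) (hy : y ∈ s) (hy0 : y ≠ 0) :
    ‖phaseTerm lam s Q k y‖ ≤ k ! / lam ^ k * (A * |y| ^ (w + 1 - 2 * k)) := by
  obtain ⟨c, hc, hEq⟩ := exists_phaseTerm_eqOn_jetSum hs hQ hlam hk1 hkN
  rw [hEq ⟨hy, hy0⟩]
  exact (norm_jetSum_le (fun i hi => hD i (by omega)) hy0 c).trans (by gcongr)

lemma continuousOn_phaseTerm (hs : UniqueDiffOn ℝ s) (hQ : ContDiffOn ℝ N Q s)
    (hlam : 0 < lam) (hk1 : 1 ≤ k) (hkN : k ≤ N + 1) :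
    ContinuousOn (phaseTerm lam s Q k) (s \ {0}) := by
  obtain ⟨c, -, hc⟩ := exists_phaseTerm_eqOn_jetSum hs hQ hlam hk1 hkN
  exact (continuousOn_jetSum hs hQ hkN c).congr hc

lemma eqOn_phaseTerm {ψ : ℕ → ℝ → ℂ}
    (hψ1 : ∀ y ∈ s, y ≠ 0 → ψ 1 y = (Q y : ℂ) / (4 * π * I * lam * y))
    (hψ : ∀ k, 2 ≤ k → k ≤ N → ∀ y ∈ s, y ≠ 0 →
      ψ k y = -(derivWithin (ψ (k - 1)) s y) / (4 * π * I * lam * y))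
    (hk1 : 1 ≤ k) (hkN : k ≤ N) : EqOn (ψ k) (phaseTerm lam s Q k) (s \ {0}) := by
  induction k, hk1 using Nat.le_induction with
  | base => exact fun y hy => hψ1 y hy.1 hy.2
  | succ k hk ih =>
    intro y hy
    rw [hψ (k + 1) (by omega) hkN y hy.1 hy.2, Nat.add_sub_cancel, phaseTerm_succ hk,
      (eventuallyEq_nhdsWithin_of_eqOn_sdiff (ih (by omega)) hy.2).derivWithin_eq
        (ih (by omega) hy)]

end PhaseTerm

section Integration

open Real intervalIntegral

variable {lam a b : ℝ}

lemma hasDerivAt_e_mul_sq (lam y : ℝ) :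
    HasDerivAt (fun y : ℝ => e (lam * y ^ 2)) (4 * π * I * lam * y * e (lam * y ^ 2)) y := by
  have h : HasDerivAt (fun y : ℝ => lam * y ^ 2) (lam * (2 * y)) y := by
    simpa using (hasDerivAt_pow 2 y).const_mul lam
  refine ((h.ofReal_comp.const_mul (2 * π * I)).cexp).congr_deriv ?_
  simp only [e]
  push_cast
  ring

lemma continuous_e_mul_sq (lam : ℝ) : Continuous fun y : ℝ => e (lam * y ^ 2) :=
  continuous_iff_continuousAt.2 fun y => (hasDerivAt_e_mul_sq lam y).continuousAt

lemma norm_e (t : ℝ) : ‖e t‖ = 1 := by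
  rw [e, show 2 * (π : ℂ) * I * t = ((2 * π * t : ℝ) : ℂ) * I by push_cast; ring]
  exact norm_exp_ofReal_mul_I _

lemma hasDerivWithinAt_telescoping_sum {f : ℕ → ℝ → ℂ} {s : Set ℝ} {y : ℝ} {u : ℂ} (N : ℕ)
    (hf : ∀ k ∈ Finset.Icc 1 N, HasDerivWithinAt (f k) (-u * f (k + 1) y) s y) :
    HasDerivWithinAt (fun z => ∑ k ∈ Finset.Icc 1 N, f k z)
      (u * (f 1 y - f (N + 1) y - ∑ k ∈ Finset.Icc 1 N, f k y)) s y := by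
  induction N with
  | zero => simpa using hasDerivWithinAt_const y s (0 : ℂ)
  | succ N ih =>
    simp only [Finset.sum_Icc_succ_top (by omega : 1 ≤ N + 1)]
    refine ((ih fun k hk => hf k (Icc_subset_Icc_right (by omega) hk)).add
      (hf (N + 1) (by simp))).congr_deriv ?_
    ring

lemma hasDerivWithinAt_e_mul_sum {f : ℕ → ℝ → ℂ} {s : Set ℝ} {y : ℝ} {q : ℂ} (N : ℕ)
    (h1 : 4 * π * I * lam * y * f 1 y = q)
    (hf : ∀ k ∈ Finset.Icc 1 N,
      HasDerivWithinAt (f k) (-(4 * π * I * lam * y) * f (k + 1) y) s y) :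
    HasDerivWithinAt (fun z => e (lam * z ^ 2) * ∑ k ∈ Finset.Icc 1 N, f k z)
      (e (lam * y ^ 2) * (q - 4 * π * I * lam * y * f (N + 1) y)) s y := by
  refine ((hasDerivAt_e_mul_sq lam y).hasDerivWithinAt.mul
    (hasDerivWithinAt_telescoping_sum N hf)).congr_deriv ?_
  rw [← h1]
  ring

lemma integral_mul_e_eq_boundary_add_remainder {f : ℕ → ℝ → ℂ} {q : ℝ → ℂ} (N : ℕ)
    (hab : a ≤ b) (hq : ContinuousOn q (Icc a b)) (hfN : ContinuousOn (f (N + 1)) (Icc a b))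
    (h1 : ∀ y ∈ Icc a b, 4 * π * I * lam * y * f 1 y = q y)
    (hf : ∀ k ∈ Finset.Icc 1 N, ∀ y ∈ Icc a b,
      HasDerivWithinAt (f k) (-(4 * π * I * lam * y) * f (k + 1) y) (Icc a b) y) :
    ∫ y in a..b, q y * e (lam * y ^ 2) =
      (e (lam * b ^ 2) * ∑ k ∈ Finset.Icc 1 N, f k b -
          e (lam * a ^ 2) * ∑ k ∈ Finset.Icc 1 N, f k a)
        + ∫ y in a..b, 4 * π * I * lam * y * f (N + 1) y * e (lam * y ^ 2) := by
  have hF (y : ℝ) (hy : y ∈ Icc a b) :=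
    hasDerivWithinAt_e_mul_sum N (h1 y hy) fun k hk => hf k hk y hy
  have he := (continuous_e_mul_sq lam).continuousOn (s := Icc a b)
  have hR : ContinuousOn (fun y : ℝ => 4 * π * I * lam * y * f (N + 1) y * e (lam * y ^ 2))
      (Icc a b) := by fun_prop
  have hF' : ContinuousOn
      (fun y : ℝ => e (lam * y ^ 2) * (q y - 4 * π * I * lam * y * f (N + 1) y)) (Icc a b) := by
    fun_prop
  have hFTC := integral_eq_sub_of_hasDeriv_right_of_le hab
    (fun y hy => (hF y hy).continuousWithinAt)
    (fun y hy => ((hF y (Ioo_subset_Icc_self hy)).hasDerivAt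
      (Icc_mem_nhds hy.1 hy.2)).hasDerivWithinAt)
    (hF'.intervalIntegrable_of_Icc hab)
  rw [← hFTC, ← integral_add (hF'.intervalIntegrable_of_Icc hab)
    (hR.intervalIntegrable_of_Icc hab)]
  congr 1 with y
  ring

lemma integral_abs_zpow_neg_three_le {d : ℝ} (hd : 0 < d) (hab : a ≤ b)
    (hside : d ≤ a ∨ b ≤ -d) : ∫ y in a..b, |y| ^ (-3 : ℤ) ≤ d ^ (-2 : ℤ) / 2 := by
  have hpos {a b : ℝ} (hda : d ≤ a) (hab : a ≤ b) :
      ∫ y in a..b, |y| ^ (-3 : ℤ) ≤ d ^ (-2 : ℤ) / 2 := by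
    have h0 : (0 : ℝ) ∉ uIcc a b := by
      rw [uIcc_of_le hab]; exact fun h => (hd.trans_le hda).not_ge h.1
    have habs : ∫ y in a..b, |y| ^ (-3 : ℤ) = ∫ y in a..b, y ^ (-3 : ℤ) :=
      integral_congr fun y hy => by
        rw [uIcc_of_le hab] at hy
        simp only [abs_of_pos (hd.trans_le (hda.trans hy.1))]
    rw [habs, integral_zpow (Or.inr ⟨by norm_num, h0⟩)]
    have hb : 0 ≤ b ^ (-2 : ℤ) := zpow_nonneg (by linarith) _
    have had : a ^ (-2 : ℤ) ≤ d ^ (-2 : ℤ) := by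
      rw [zpow_neg, zpow_neg]
      exact inv_anti₀ (by positivity) (zpow_le_zpow_left₀ (by norm_num) hd.le hda)
    rw [show (-3 : ℤ) + 1 = -2 by norm_num, show ((-3 : ℤ) : ℝ) + 1 = -2 by norm_num]
    linarith
  rcases hside with hda | hbd
  · exact hpos hda hab
  · have hneg := integral_comp_neg (a := -b) (b := -a) (fun y => |y| ^ (-3 : ℤ))
    simp only [abs_neg, neg_neg] at hneg
    exact hneg ▸ hpos (by linarith) (by linarith)

lemma norm_integral_le_of_norm_le_abs_zpow_neg_three {g : ℝ → ℂ} {M d : ℝ} (hM : 0 ≤ M)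
    (hd : 0 < d) (hab : a ≤ b) (hside : d ≤ a ∨ b ≤ -d)
    (hg : ∀ y ∈ Icc a b, ‖g y‖ ≤ M * |y| ^ (-3 : ℤ)) :
    ‖∫ y in a..b, g y‖ ≤ M * d ^ (-2 : ℤ) / 2 := by
  have h0 : ∀ y ∈ Icc a b, y ≠ 0 := fun y hy h => by
    rcases hside with h' | h' <;> linarith [hy.1, hy.2]
  have hint : IntervalIntegrable (fun y => M * |y| ^ (-3 : ℤ)) MeasureTheory.volume a b :=
    (continuousOn_const.mul (continuous_abs.continuousOn.zpow₀ _
      fun y hy => Or.inl (abs_ne_zero.2 (h0 y hy)))).intervalIntegrable_of_Icc hab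
  calc ‖∫ y in a..b, g y‖ ≤ ∫ y in a..b, M * |y| ^ (-3 : ℤ) :=
        norm_integral_le_of_norm_le hab (Filter.Eventually.of_forall fun y hy =>
          hg y (Ioc_subset_Icc_self hy)) hint
    _ ≤ M * d ^ (-2 : ℤ) / 2 := by
        rw [integral_const_mul, mul_div_assoc]
        exact mul_le_mul_of_nonneg_left (integral_abs_zpow_neg_three_le hd hab hside) hM

lemma norm_integral_mul_e_le {Q : ℝ → ℝ} {A d : ℝ} {m : ℕ} (hA : 0 ≤ A) (hd : 0 ≤ d)
    (hQ : ∀ y ∈ Icc (-d) d, |Q y| ≤ A * |y| ^ m) :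
    ‖∫ y in (-d)..d, (Q y : ℂ) * e (lam * y ^ 2)‖ ≤ 2 * A * d ^ (m + 1) := by
  have hbound : ∀ y ∈ uIoc (-d) d, ‖(Q y : ℂ) * e (lam * y ^ 2)‖ ≤ A * d ^ m := by
    intro y hy
    rw [uIoc_of_le (by linarith)] at hy
    rw [norm_mul, norm_e, mul_one, norm_real, Real.norm_eq_abs]
    refine (hQ y (Ioc_subset_Icc_self hy)).trans ?_
    gcongr
    exact abs_le.2 ⟨hy.1.le, hy.2⟩
  refine (norm_integral_le_of_norm_le_const hbound).trans_eq ?_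
  rw [show d - -d = 2 * d by ring, abs_of_nonneg (by linarith), pow_succ]
  ring

end Integration

section StationaryPhase

open Real

variable {n k : ℕ} {lam A r y : ℝ} {Q : ℝ → ℝ}

def IteratedDerivBound (Q : ℝ → ℝ) (s : Set ℝ) (N : ℕ) (A : ℝ) (w : ℤ) : Prop :=
  ∀ j ≤ N, ∀ y ∈ s, |iteratedDerivWithin j Q s y| ≤ A * |y| ^ (w - j)

noncomputable def phaseBoundary (lam : ℝ) (s : Set ℝ) (Q : ℝ → ℝ) (N : ℕ) (y : ℝ) : ℂ :=
  e (lam * y ^ 2) * ∑ k ∈ Finset.Icc 1 N, phaseTerm lam s Q k y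

lemma norm_phaseTerm_Icc_le (hlam : 0 < lam) (hA : 0 ≤ A)
    (hQ : ContDiffOn ℝ (n + 2 : ℕ) Q (Icc (-r) r))
    (hD : IteratedDerivBound Q (Icc (-r) r) (n + 2) A (2 * n + 1))
    (hk1 : 1 ≤ k) (hk : k ≤ n + 3) (hy : y ∈ Icc (-r) r) (hy0 : y ≠ 0) :
    ‖phaseTerm lam (Icc (-r) r) Q k y‖ ≤
      k ! * (A / lam ^ (n + 1)) * (lam * y ^ 2) ^ ((n : ℤ) + 1 - k) := by
  have hr : -r < r := by rcases hy0.lt_or_gt with h | h <;> linarith [hy.1, hy.2]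
  refine (norm_phaseTerm_le (uniqueDiffOn_Icc hr) hQ hlam hA (fun j hj => hD j hj y hy) hk1
    (by omega) hy hy0).trans_eq ?_
  rw [show (2 * n + 1 : ℤ) + 1 - 2 * k = 2 * ((n : ℤ) + 1 - k) by ring, zpow_mul, mul_zpow,
    show |y| ^ (2 : ℤ) = y ^ 2 by norm_num, zpow_sub₀ hlam.ne', zpow_add_one₀ hlam.ne',
    zpow_natCast, zpow_natCast]
  field_simp
  ring

lemma norm_remainder_le (hlam : 0 < lam) (hA : 0 ≤ A)
    (hQ : ContDiffOn ℝ (n + 2 : ℕ) Q (Icc (-r) r))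
    (hD : IteratedDerivBound Q (Icc (-r) r) (n + 2) A (2 * n + 1))
    (hy : y ∈ Icc (-r) r) (hy0 : y ≠ 0) :
    ‖4 * π * I * lam * y * phaseTerm lam (Icc (-r) r) Q (n + 3) y * e (lam * y ^ 2)‖ ≤
      4 * π * (n + 3)! * (A / lam ^ (n + 1)) / lam * |y| ^ (-3 : ℤ) := by
  have hφ := norm_phaseTerm_Icc_le hlam hA hQ hD (k := n + 3) (by omega) le_rfl hy hy0
  rw [show (n : ℤ) + 1 - ((n + 3 : ℕ) : ℤ) = -2 by push_cast; ring] at hφ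
  have hω : ‖(4 * π * I * lam * y : ℂ)‖ = 4 * π * lam * |y| := by
    simp [abs_of_pos pi_pos, abs_of_pos hlam]
  rw [norm_mul, norm_mul, norm_e, mul_one, hω]
  calc 4 * π * lam * |y| * ‖phaseTerm lam (Icc (-r) r) Q (n + 3) y‖
      ≤ 4 * π * lam * |y| * ((n + 3)! * (A / lam ^ (n + 1)) * (lam * y ^ 2) ^ (-2 : ℤ)) := by
        gcongr
    _ = 4 * π * (n + 3)! * (A / lam ^ (n + 1)) / lam * |y| ^ (-3 : ℤ) := by
        have hy0 : |y| ≠ 0 := abs_ne_zero.2 hy0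
        rw [← sq_abs y, zpow_neg, zpow_neg, zpow_ofNat, zpow_ofNat]
        field_simp

lemma norm_integral_outer_sub_boundary_le (hlam : 0 < lam) (hA : 0 ≤ A)
    (hQ : ContDiffOn ℝ (n + 2 : ℕ) Q (Icc (-r) r))
    (hD : IteratedDerivBound Q (Icc (-r) r) (n + 2) A (2 * n + 1))
    {a b : ℝ} (hab : a ≤ b) (hsub : Icc a b ⊆ Icc (-r) r)
    (hside : 1 / √lam ≤ a ∨ b ≤ -(1 / √lam)) :
    ‖(∫ y in a..b, (Q y : ℂ) * e (lam * y ^ 2)) -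
        (phaseBoundary lam (Icc (-r) r) Q (n + 2) b - phaseBoundary lam (Icc (-r) r) Q (n + 2) a)‖ ≤
      2 * π * (n + 3)! * (A / lam ^ (n + 1)) := by
  have hd : 0 < 1 / √lam := by positivity
  have h0 (y) (hy : y ∈ Icc a b) : y ≠ 0 := by
    rintro rfl
    rcases hside with h | h <;> linarith [hy.1, hy.2]
  have hr : -r < r := by
    have := hsub ⟨le_rfl, hab⟩
    rcases (h0 a ⟨le_rfl, hab⟩).lt_or_gt with h | h <;> linarith [this.1, this.2]
  have hs := uniqueDiffOn_Icc hr
  rw [phaseBoundary, phaseBoundary, integral_mul_e_eq_boundary_add_remainder (n + 2) hab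
    (q := fun y => (Q y : ℂ)) (continuous_ofReal.comp_continuousOn (hQ.continuousOn.mono hsub))
    ((continuousOn_phaseTerm hs hQ hlam (by omega) le_rfl).mono fun y hy => ⟨hsub hy, h0 y hy⟩)
    (fun y hy => mul_div_cancel₀ _ (four_pi_I_mul_ne_zero hlam (h0 y hy)))
    (fun k hk y hy => ((hasDerivWithinAt_phaseTerm hs hQ hlam (Finset.mem_Icc.1 hk).1
      (Finset.mem_Icc.1 hk).2 (hsub hy) (h0 y hy)).mono hsub)), add_sub_cancel_left]
  refine (norm_integral_le_of_norm_le_abs_zpow_neg_three (by positivity) hd hab hside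
    fun y hy => norm_remainder_le hlam hA hQ hD (hsub hy) (h0 y hy)).trans_eq ?_
  rw [zpow_neg, zpow_ofNat, div_pow, sq_sqrt hlam.le, one_pow, one_div, inv_inv]
  field_simp
  ring

lemma norm_e_mul_phaseTerm_le (hlam : 0 < lam) (hA : 0 ≤ A)
    (hQ : ContDiffOn ℝ (n + 2 : ℕ) Q (Icc (-r) r))
    (hD : IteratedDerivBound Q (Icc (-r) r) (n + 2) A (2 * n + 1))
    (hk : n + 1 ≤ k) (hk3 : k ≤ n + 3) (hy : y ∈ Icc (-r) r) (hy1 : 1 ≤ lam * y ^ 2) :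
    ‖e (lam * y ^ 2) * phaseTerm lam (Icc (-r) r) Q k y‖ ≤ k ! * (A / lam ^ (n + 1)) := by
  have hy0 : y ≠ 0 := by rintro rfl; norm_num at hy1
  rw [norm_mul, norm_e, one_mul]
  refine (norm_phaseTerm_Icc_le hlam hA hQ hD (by omega) hk3 hy hy0).trans ?_
  exact mul_le_of_le_one_right (by positivity) (zpow_le_one_of_nonpos₀ hy1 (by omega))

lemma norm_phaseBoundary_le (hlam : 0 < lam) (hA : 0 ≤ A)
    (hQ : ContDiffOn ℝ (n + 2 : ℕ) Q (Icc (-r) r))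
    (hD : IteratedDerivBound Q (Icc (-r) r) (n + 2) A (2 * n + 1))
    (hy : y ∈ Icc (-r) r) (hy1 : lam * y ^ 2 = 1) :
    ‖phaseBoundary lam (Icc (-r) r) Q (n + 2) y‖ ≤
      (∑ k ∈ Finset.Icc 1 (n + 2), (k ! : ℝ)) * (A / lam ^ (n + 1)) := by
  have hy0 : y ≠ 0 := by rintro rfl; norm_num at hy1
  rw [phaseBoundary, norm_mul, norm_e, one_mul, Finset.sum_mul]
  refine (norm_sum_le _ _).trans (Finset.sum_le_sum fun k hk => ?_)
  have hk := Finset.mem_Icc.1 hk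
  refine (norm_phaseTerm_Icc_le hlam hA hQ hD hk.1 (by omega) hy hy0).trans_eq ?_
  rw [hy1, one_zpow, mul_one]

lemma norm_integral_center_le (hlam : 0 < lam) (hA : 0 ≤ A)
    (hD : IteratedDerivBound Q (Icc (-r) r) (n + 2) A (2 * n + 1)) (hr : 1 / √lam ≤ r) :
    ‖∫ y in (-(1 / √lam))..(1 / √lam), (Q y : ℂ) * e (lam * y ^ 2)‖ ≤
      2 * (A / lam ^ (n + 1)) := by
  have hd : 0 < 1 / √lam := by positivity
  have hQ0 : ∀ y ∈ Icc (-(1 / √lam)) (1 / √lam), |Q y| ≤ A * |y| ^ (2 * n + 1) := by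
    intro y hy
    have := hD 0 (by omega) y ⟨by linarith [hy.1], by linarith [hy.2]⟩
    rwa [iteratedDerivWithin_zero, Nat.cast_zero, sub_zero,
      show (2 * n + 1 : ℤ) = ((2 * n + 1 : ℕ) : ℤ) by push_cast; ring, zpow_natCast] at this
  refine (norm_integral_mul_e_le hA hd.le hQ0).trans_eq ?_
  rw [show 2 * n + 1 + 1 = 2 * (n + 1) by ring, pow_mul, div_pow, sq_sqrt hlam.le, one_pow,
    one_div, inv_pow, div_eq_mul_inv, mul_assoc]

-- `Iᵢ` are the integrals over `[-r, -d]`, `[-d, d]`, `[d, r]`; `Fᵢ` the boundary terms at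
-- `-r, -d, d, r`, of which `Pᵢ` is the part beyond the sum in the statement.
lemma norm_split_sub_le {E : Type*} [SeminormedAddCommGroup E]
    (I₁ I₂ I₃ F₁ F₂ F₃ F₄ P₁ P₄ : E) :
    ‖I₁ + I₂ + I₃ - ((F₄ - P₄) - (F₁ - P₁))‖ ≤
      ‖I₁ - (F₂ - F₁)‖ + ‖I₂‖ + ‖I₃ - (F₄ - F₃)‖ + ‖P₄‖ + ‖P₁‖ + ‖F₂‖ + ‖F₃‖ := by
  rw [show I₁ + I₂ + I₃ - ((F₄ - P₄) - (F₁ - P₁)) =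
    (I₁ - (F₂ - F₁)) + I₂ + (I₃ - (F₄ - F₃)) + P₄ - P₁ + F₂ - F₃ by abel]
  refine (norm_sub_le _ _).trans (add_le_add_left ?_ _)
  refine (norm_add_le _ _).trans (add_le_add_left ?_ _)
  refine (norm_sub_le _ _).trans (add_le_add_left ?_ _)
  exact (norm_add_le _ _).trans (add_le_add_left norm_add₃_le _)

lemma integral_eq_add_add {f : ℝ → ℂ} {r d : ℝ} (hf : ContinuousOn f (Icc (-r) r))
    (hd : 0 ≤ d) (hdr : d ≤ r) :
    ∫ y in (-r)..r, f y = (∫ y in (-r)..(-d), f y) + (∫ y in (-d)..d, f y) + ∫ y in d..r, f y := by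
  have hint {a b : ℝ} (ha : a ∈ Icc (-r) r) (hb : b ∈ Icc (-r) r) :
      IntervalIntegrable f MeasureTheory.volume a b :=
    (hf.mono (uIcc_subset_Icc ha hb)).intervalIntegrable
  have hmr : -r ∈ Icc (-r) r := ⟨le_rfl, by linarith⟩
  have hmd : -d ∈ Icc (-r) r := ⟨by linarith, by linarith⟩
  have hpd : d ∈ Icc (-r) r := ⟨by linarith, hdr⟩
  have hpr : r ∈ Icc (-r) r := ⟨by linarith, le_rfl⟩
  rw [intervalIntegral.integral_add_adjacent_intervals (hint hmr hmd) (hint hmd hpd),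
    intervalIntegral.integral_add_adjacent_intervals (hint hmr hpd) (hint hpd hpr)]

noncomputable def stationaryPhaseConst (n : ℕ) : ℝ :=
  2 + 4 * π * (n + 3)! + 2 * (n + 2)! + 2 * ∑ k ∈ Finset.Icc 1 (n + 2), (k ! : ℝ)

lemma stationaryPhaseConst_pos (n : ℕ) : 0 < stationaryPhaseConst n := by
  unfold stationaryPhaseConst
  positivity

lemma norm_integral_sub_phaseBoundary_le (hlam : 0 < lam) (hA : 0 ≤ A) (hr : 1 / √lam ≤ r)
    (hQ : ContDiffOn ℝ (n + 2 : ℕ) Q (Icc (-r) r))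
    (hD : IteratedDerivBound Q (Icc (-r) r) (n + 2) A (2 * n + 1)) :
    ‖(∫ y in (-r)..r, (Q y : ℂ) * e (lam * y ^ 2)) -
        (phaseBoundary lam (Icc (-r) r) Q (n + 1) r -
          phaseBoundary lam (Icc (-r) r) Q (n + 1) (-r))‖ ≤
      stationaryPhaseConst n * (A / lam ^ (n + 1)) := by
  set d := 1 / √lam with hd_def
  have hd : 0 < d := by positivity
  have hd2 : lam * d ^ 2 = 1 := by
    rw [hd_def, div_pow, sq_sqrt hlam.le, one_pow, mul_one_div_cancel hlam.ne']
  have hr2 : 1 ≤ lam * r ^ 2 := hd2 ▸ by gcongr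
  have hsucc (y : ℝ) : phaseBoundary lam (Icc (-r) r) Q (n + 1) y =
      phaseBoundary lam (Icc (-r) r) Q (n + 2) y -
        e (lam * y ^ 2) * phaseTerm lam (Icc (-r) r) Q (n + 2) y := by
    rw [phaseBoundary, phaseBoundary, Finset.sum_Icc_succ_top (by omega : 1 ≤ n + 2)]
    ring
  rw [integral_eq_add_add (f := fun y => (Q y : ℂ) * e (lam * y ^ 2))
    ((continuous_ofReal.comp_continuousOn hQ.continuousOn).mul
      (continuous_e_mul_sq lam).continuousOn) hd.le hr, hsucc, hsucc]
  refine (norm_split_sub_le _ _ _ _ (phaseBoundary lam (Icc (-r) r) Q (n + 2) (-d))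
    (phaseBoundary lam (Icc (-r) r) Q (n + 2) d) _ _ _).trans ?_
  have hL := norm_integral_outer_sub_boundary_le hlam hA hQ hD (a := -r) (b := -d)
    (by linarith) (Icc_subset_Icc le_rfl (by linarith)) (Or.inr le_rfl)
  have hR := norm_integral_outer_sub_boundary_le hlam hA hQ hD (a := d) (b := r) hr
    (Icc_subset_Icc (by linarith) le_rfl) (Or.inl le_rfl)
  have hPr := norm_e_mul_phaseTerm_le hlam hA hQ hD (k := n + 2) (by omega) (by omega)
    ⟨by linarith, le_rfl⟩ hr2
  have hPr' := norm_e_mul_phaseTerm_le hlam hA hQ hD (k := n + 2) (by omega) (by omega)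
    ⟨le_rfl, by linarith⟩ (by rwa [neg_sq])
  have hFd := norm_phaseBoundary_le hlam hA hQ hD ⟨by linarith, hr⟩ hd2
  have hFd' := norm_phaseBoundary_le hlam hA hQ hD (y := -d) ⟨by linarith, by linarith⟩
    (by rwa [neg_sq])
  unfold stationaryPhaseConst
  linarith [norm_integral_center_le hlam hA hD hr]

end StationaryPhase

/-- Let `n ≥ 1`, `λ > 0`, `A > 0`, `r ≥ λ^{−1/2}`, and let
`Q : [−r,r] → ℝ` be `n+2` times continuously differentiable with
`|Q^{(t)}(y)| ≤ A|y|^{2n+1−t}` for `0 ≤ t ≤ n+2`.  With `ψ₁(y) = Q(y)/(4πiλy)` and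
`ψ_k(y) = −ψ'_{k−1}(y)/(4πiλy)` for `2 ≤ k ≤ n+1` (for `y ≠ 0`), one has
`∫_{−r}^{r} Q(y) e(λy²) dy = [e(λy²) Σ_{k=1}^{n+1} ψ_k(y)]_{−r}^{r} + O(A λ^{−(n+1)})`,
with implied constant depending only on `n`. -/
theorem weighted_stationary_phase_stmt17 (n : ℕ) (hn : 1 ≤ n) :
    ∃ K : ℝ, 0 < K ∧
      ∀ (lam A r : ℝ) (Q : ℝ → ℝ) (ψ : ℕ → ℝ → ℂ),
        0 < lam → 0 < A → 1 / Real.sqrt lam ≤ r →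
        ContDiffOn ℝ (n + 2) Q (Set.Icc (-r) r) →
        (∀ t, t ≤ n + 2 → ∀ y ∈ Set.Icc (-r) r,
          |iteratedDerivWithin t Q (Set.Icc (-r) r) y| ≤ A * |y| ^ (2 * n + 1 - t)) →
        (∀ y ∈ Set.Icc (-r) r, y ≠ 0 →
          ψ 1 y = (Q y : ℂ) / (4 * Real.pi * Complex.I * lam * y)) →
        (∀ k, 2 ≤ k → k ≤ n + 1 → ∀ y ∈ Set.Icc (-r) r, y ≠ 0 →
          ψ k y = -(derivWithin (ψ (k - 1)) (Set.Icc (-r) r) y) /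
            (4 * Real.pi * Complex.I * lam * y)) →
        ‖(∫ y in (-r)..r, (Q y : ℂ) * e (lam * y ^ 2)) -
            ((fun y : ℝ => e (lam * y ^ 2) * ∑ k ∈ Finset.Icc 1 (n + 1), ψ k y) r -
             (fun y : ℝ => e (lam * y ^ 2) * ∑ k ∈ Finset.Icc 1 (n + 1), ψ k y) (-r))‖ ≤
          K * (A / lam ^ (n + 1)) := by
  refine ⟨stationaryPhaseConst n, stationaryPhaseConst_pos n, ?_⟩
  intro lam A r Q ψ hlam hA hr hQ hbd hψ1 hψk
  have hr0 : 0 < r := (by positivity : 0 < 1 / Real.sqrt lam).trans_le hr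
  have hD : IteratedDerivBound Q (Icc (-r) r) (n + 2) A (2 * n + 1) := by
    intro j hj y hy
    rw [show (2 * n + 1 : ℤ) - j = ((2 * n + 1 - j : ℕ) : ℤ) by omega, zpow_natCast]
    exact hbd j hj y hy
  have hψ (y : ℝ) (hy : y ∈ Icc (-r) r) (hy0 : y ≠ 0) :
      ∑ k ∈ Finset.Icc 1 (n + 1), ψ k y =
        ∑ k ∈ Finset.Icc 1 (n + 1), phaseTerm lam (Icc (-r) r) Q k y :=
    Finset.sum_congr rfl fun k hk => eqOn_phaseTerm hψ1 hψk (Finset.mem_Icc.1 hk).1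
      (Finset.mem_Icc.1 hk).2 ⟨hy, hy0⟩
  beta_reduce
  rw [hψ r ⟨by linarith, le_rfl⟩ hr0.ne', hψ (-r) ⟨le_rfl, by linarith⟩ (by linarith)]
  exact norm_integral_sub_phaseBoundary_le hlam hA.le hr (by exact_mod_cast hQ) hD
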